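/- Let (A_L, S) be a Hopf algebroid, i.e. a left bialgebroid (A, L, s_L, t_L, γ_L, π_L) with anti-automorphism S of A satisfying S ∘ t_L = s_L, S⁻¹(a₍₂₎)₍₁'₎ ⊗ S⁻¹(a₍₂₎)₍₂'₎ a₍₁₎ = S⁻¹(a) ⊗ 1 and S(a₍₁₎)₍₁'₎ a₍₂₎ ⊗ S(a₍₁₎)₍₂'₎ = 1 ⊗ S(a) in A ⊗_L A. Then S(a₍₁₎) a₍₂₎ = t_L(π_L(S(a))) for all a ∈ A. -/

import Mathlib

open scoped TensorProduct

namespace HopfAlgd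

variable (A : Type*) [Ring A]

/-- `x ⊗ (y ⊗ z) ↦ (y * x) ⊗ z`. -/
noncomputable def m13 : A ⊗[ℤ] (A ⊗[ℤ] A) →ₗ[ℤ] A ⊗[ℤ] A :=
  (LinearMap.rTensor A (LinearMap.mul' ℤ A)) ∘ₗ
  (TensorProduct.assoc ℤ A A A).symm.toLinearMap ∘ₗ
  (LinearMap.lTensor A (TensorProduct.comm ℤ A A).toLinearMap) ∘ₗ
  (TensorProduct.assoc ℤ A A A).toLinearMap ∘ₗ
  (TensorProduct.comm ℤ A (A ⊗[ℤ] A)).toLinearMap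

/-- `x ⊗ (y ⊗ z) ↦ y ⊗ (z * x)`. -/
noncomputable def m23 : A ⊗[ℤ] (A ⊗[ℤ] A) →ₗ[ℤ] A ⊗[ℤ] A :=
  (LinearMap.lTensor A (LinearMap.mul' ℤ A)) ∘ₗ
  (TensorProduct.assoc ℤ A A A).toLinearMap ∘ₗ
  (TensorProduct.comm ℤ A (A ⊗[ℤ] A)).toLinearMap

/-- `(x ⊗ y) ⊗ z ↦ (x * z) ⊗ y`. -/
noncomputable def m13' : (A ⊗[ℤ] A) ⊗[ℤ] A →ₗ[ℤ] A ⊗[ℤ] A :=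
  (LinearMap.rTensor A (LinearMap.mul' ℤ A)) ∘ₗ
  (TensorProduct.assoc ℤ A A A).symm.toLinearMap ∘ₗ
  (LinearMap.lTensor A (TensorProduct.comm ℤ A A).toLinearMap) ∘ₗ
  (TensorProduct.assoc ℤ A A A).toLinearMap

/-- `(x ⊗ y) ⊗ z ↦ x ⊗ (y * z)`. -/
noncomputable def m23' : (A ⊗[ℤ] A) ⊗[ℤ] A →ₗ[ℤ] A ⊗[ℤ] A :=
  (LinearMap.lTensor A (LinearMap.mul' ℤ A)) ∘ₗ (TensorProduct.assoc ℤ A A A).toLinearMap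

variable {A}

/-- The subgroup of `A ⊗[ℤ] A` implementing the tensor product over a base ring, where the
relevant right action on the first factor is `f` and left action on the second factor is `g`. -/
def trel {L : Type*} (f g : L → A → A) : Submodule ℤ (A ⊗[ℤ] A) :=
  Submodule.span ℤ {x | ∃ (l : L) (a b : A), x = f l a ⊗ₜ[ℤ] b - a ⊗ₜ[ℤ] g l b}

/-- Analogue of `trel` for threefold tensor products. -/
def trel3 {L R : Type*} (f g : L → A → A) (f' g' : R → A → A) :
    Submodule ℤ (A ⊗[ℤ] (A ⊗[ℤ] A)) :=
  Submodule.span ℤ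
    ({x | ∃ (l : L) (a b c : A),
        x = f l a ⊗ₜ[ℤ] (b ⊗ₜ[ℤ] c) - a ⊗ₜ[ℤ] (g l b ⊗ₜ[ℤ] c)} ∪
     {x | ∃ (r : R) (a b c : A),
        x = a ⊗ₜ[ℤ] (f' r b ⊗ₜ[ℤ] c) - a ⊗ₜ[ℤ] (b ⊗ₜ[ℤ] g' r c)})

variable (A) in
/-- The data of a left bialgebroid: source and target maps, a chosen (Sweedler
representative of the) coproduct, and the counit. -/
structure LeftBialgebroidData (L : Type*) [Ring L] where
  s : L →+* A
  t : L →+ A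
  t_one : t 1 = 1
  t_mul : ∀ l l', t (l * l') = t l' * t l
  st_comm : ∀ l l', s l * t l' = t l' * s l
  Δ : A →+ A ⊗[ℤ] A
  π : A →+ L

variable {L R : Type*} [Ring L] [Ring R]

/-- The subgroup of `A ⊗[ℤ] A` by which one quotients to get `A_L ⊗_L _L A`. -/
def LeftBialgebroidData.rel (B : LeftBialgebroidData A L) : Submodule ℤ (A ⊗[ℤ] A) :=
  trel (fun l a => B.t l * a) (fun l b => B.s l * b)

def LeftBialgebroidData.rel3 (B : LeftBialgebroidData A L) :
    Submodule ℤ (A ⊗[ℤ] (A ⊗[ℤ] A)) :=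
  trel3 (fun l a => B.t l * a) (fun l b => B.s l * b)
        (fun l a => B.t l * a) (fun l b => B.s l * b)

variable (A) in
/-- A left bialgebroid (Takeuchi `×_L`-bialgebra), with the comonoid structure encoded via a
chosen additive lift `Δ` of the coproduct `γ_L`; all equalities in `A ⊗_L A` are expressed
as membership of differences in the relation subgroup `rel`. -/
structure LeftBialgebroid (L : Type*) [Ring L] extends LeftBialgebroidData A L where
  coassoc : ∀ a, HSub.hSub (α := A ⊗[ℤ] (A ⊗[ℤ] A)) (β := A ⊗[ℤ] (A ⊗[ℤ] A)) ((LinearMap.lTensor A Δ.toIntLinearMap) (Δ a))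
      ((TensorProduct.assoc ℤ A A A) ((LinearMap.rTensor A Δ.toIntLinearMap) (Δ a)))
      ∈ toLeftBialgebroidData.rel3
  cros : ∀ a l, (LinearMap.rTensor A (LinearMap.mulRight ℤ (t l))) (Δ a)
      - (LinearMap.lTensor A (LinearMap.mulRight ℤ (s l))) (Δ a) ∈ toLeftBialgebroidData.rel
  Δ_one : Δ 1 - (1 : A) ⊗ₜ[ℤ] (1 : A) ∈ toLeftBialgebroidData.rel
  Δ_mul : ∀ a b, Δ (a * b) - Δ a * Δ b ∈ toLeftBialgebroidData.rel
  counit_s : ∀ a, LinearMap.mul' ℤ A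
      ((LinearMap.rTensor A (s.toAddMonoidHom.comp π).toIntLinearMap) (Δ a)) = a
  counit_t : ∀ a, LinearMap.mul' ℤ A ((TensorProduct.comm ℤ A A)
      ((LinearMap.lTensor A (t.comp π).toIntLinearMap) (Δ a))) = a
  π_one : π 1 = 1
  π_s : ∀ a b, π (a * s (π b)) = π (a * b)
  π_t : ∀ a b, π (a * t (π b)) = π (a * b)
  π_bimod : ∀ l l' a, π (s l * (t l' * a)) = l * π a * l'

def LeftBialgebroid.rel (B : LeftBialgebroid A L) : Submodule ℤ (A ⊗[ℤ] A) :=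
  B.toLeftBialgebroidData.rel

variable (A) in
/-- The data of a right bialgebroid. -/
structure RightBialgebroidData (R : Type*) [Ring R] where
  s : R →+* A
  t : R →+ A
  t_one : t 1 = 1
  t_mul : ∀ r r', t (r * r') = t r' * t r
  st_comm : ∀ r r', s r * t r' = t r' * s r
  Δ : A →+ A ⊗[ℤ] A
  π : A →+ R

/-- The subgroup of `A ⊗[ℤ] A` by which one quotients to get `A^R ⊗_R ^R A`. -/
def RightBialgebroidData.rel (B : RightBialgebroidData A R) : Submodule ℤ (A ⊗[ℤ] A) :=
  trel (fun r a => a * B.s r) (fun r b => b * B.t r)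

def RightBialgebroidData.rel3 (B : RightBialgebroidData A R) :
    Submodule ℤ (A ⊗[ℤ] (A ⊗[ℤ] A)) :=
  trel3 (fun r a => a * B.s r) (fun r b => b * B.t r)
        (fun r a => a * B.s r) (fun r b => b * B.t r)

variable (A) in
/-- A right bialgebroid, with chosen additive lift `Δ` of the coproduct `γ_R`. -/
structure RightBialgebroid (R : Type*) [Ring R] extends RightBialgebroidData A R where
  coassoc : ∀ a, HSub.hSub (α := A ⊗[ℤ] (A ⊗[ℤ] A)) (β := A ⊗[ℤ] (A ⊗[ℤ] A)) ((LinearMap.lTensor A Δ.toIntLinearMap) (Δ a))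
      ((TensorProduct.assoc ℤ A A A) ((LinearMap.rTensor A Δ.toIntLinearMap) (Δ a)))
      ∈ toRightBialgebroidData.rel3
  cros : ∀ a r, (LinearMap.rTensor A (LinearMap.mulLeft ℤ (s r))) (Δ a)
      - (LinearMap.lTensor A (LinearMap.mulLeft ℤ (t r))) (Δ a) ∈ toRightBialgebroidData.rel
  Δ_one : Δ 1 - (1 : A) ⊗ₜ[ℤ] (1 : A) ∈ toRightBialgebroidData.rel
  Δ_mul : ∀ a b, Δ (a * b) - Δ a * Δ b ∈ toRightBialgebroidData.rel
  counit_s : ∀ a, LinearMap.mul' ℤ A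
      ((LinearMap.lTensor A (s.toAddMonoidHom.comp π).toIntLinearMap) (Δ a)) = a
  counit_t : ∀ a, LinearMap.mul' ℤ A ((TensorProduct.comm ℤ A A)
      ((LinearMap.rTensor A (t.comp π).toIntLinearMap) (Δ a))) = a
  π_one : π 1 = 1
  π_s : ∀ a b, π (s (π a) * b) = π (a * b)
  π_t : ∀ a b, π (t (π a) * b) = π (a * b)
  π_bimod : ∀ r r' a, π (a * s r' * t r) = r * π a * r'

def RightBialgebroid.rel (B : RightBialgebroid A R) : Submodule ℤ (A ⊗[ℤ] A) :=
  B.toRightBialgebroidData.rel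

/-- The expression `a ↦ ∑ (f a₍₁₎)₍₁'₎ a₍₂₎ ⊗ (f a₍₁₎)₍₂'₎` (applied to `Δ a`). -/
noncomputable def axsExpr (Δ : A →+ A ⊗[ℤ] A) (f : A →+ A) :
    A ⊗[ℤ] A →ₗ[ℤ] A ⊗[ℤ] A :=
  m13' A ∘ₗ LinearMap.rTensor A (Δ.toIntLinearMap ∘ₗ f.toIntLinearMap)

/-- The expression `a ↦ ∑ (f a₍₂₎)₍₁'₎ ⊗ (f a₍₂₎)₍₂'₎ a₍₁₎` (applied to `Δ a`). -/
noncomputable def axsiExpr (Δ : A →+ A ⊗[ℤ] A) (f : A →+ A) :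
    A ⊗[ℤ] A →ₗ[ℤ] A ⊗[ℤ] A :=
  m23 A ∘ₗ LinearMap.lTensor A (Δ.toIntLinearMap ∘ₗ f.toIntLinearMap)

/-- Definition 4.1 of Böhm–Szlachányi: a Hopf algebroid is a left bialgebroid together with a
ring anti-automorphism `S` such that `S ∘ t_L = s_L` and the two antipode axioms hold. -/
structure IsHopfAlgebroid (B : LeftBialgebroid A L) (S : A ≃+ A) : Prop where
  anti_mul : ∀ a b, S (a * b) = S b * S a
  one_map : S 1 = 1
  S_t : ∀ l, S (B.t l) = B.s l
  axs : ∀ a, axsExpr B.Δ S.toAddMonoidHom (B.Δ a) - (1 : A) ⊗ₜ[ℤ] S a ∈ B.rel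
  axsi : ∀ a, axsiExpr B.Δ S.symm.toAddMonoidHom (B.Δ a) - S.symm a ⊗ₜ[ℤ] (1 : A) ∈ B.rel

/-- The relation subgroup for `A_L ⊗_L (_L A^R) ⊗_R (^R A)`. -/
def mixedRel₁ (Bl : LeftBialgebroidData A L) (Br : RightBialgebroidData A R) :
    Submodule ℤ (A ⊗[ℤ] (A ⊗[ℤ] A)) :=
  trel3 (fun l a => Bl.t l * a) (fun l b => Bl.s l * b)
        (fun r b => b * Br.s r) (fun r c => c * Br.t r)

/-- The relation subgroup for `A^R ⊗_R (^R A_L) ⊗_L (_L A)`. -/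
def mixedRel₂ (Bl : LeftBialgebroidData A L) (Br : RightBialgebroidData A R) :
    Submodule ℤ (A ⊗[ℤ] (A ⊗[ℤ] A)) :=
  trel3 (fun r a => a * Br.s r) (fun r b => b * Br.t r)
        (fun l b => Bl.t l * b) (fun l c => Bl.s l * c)

variable (A L R) in
/-- A symmetrized Hopf algebroid in the sense of Proposition 4.2 (iii) of Böhm–Szlachányi:
compatible left and right bialgebroid structures over anti-isomorphic base rings, connected
by an additive bijection `S` satisfying the twisted bimodule and antipode conditions. -/
structure SymHopfAlgebroid : Type _ where
  left : LeftBialgebroid A L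
  right : RightBialgebroid A R
  S : A ≃+ A
  base_op : Nonempty (L ≃+* Rᵐᵒᵖ)
  st_img : ∀ l, ∃ r, left.s l = right.t r
  ts_img : ∀ r, ∃ l, right.t r = left.s l
  ts_img' : ∀ l, ∃ r, left.t l = right.s r
  st_img' : ∀ r, ∃ l, right.s r = left.t l
  mixed₁ : ∀ a, HSub.hSub (α := A ⊗[ℤ] (A ⊗[ℤ] A)) (β := A ⊗[ℤ] (A ⊗[ℤ] A)) ((TensorProduct.assoc ℤ A A A)
        ((LinearMap.rTensor A left.Δ.toIntLinearMap) (right.Δ a)))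
      ((LinearMap.lTensor A right.Δ.toIntLinearMap) (left.Δ a))
      ∈ mixedRel₁ left.toLeftBialgebroidData right.toRightBialgebroidData
  mixed₂ : ∀ a, HSub.hSub (α := A ⊗[ℤ] (A ⊗[ℤ] A)) (β := A ⊗[ℤ] (A ⊗[ℤ] A)) ((TensorProduct.assoc ℤ A A A)
        ((LinearMap.rTensor A right.Δ.toIntLinearMap) (left.Δ a)))
      ((LinearMap.lTensor A left.Δ.toIntLinearMap) (right.Δ a))
      ∈ mixedRel₂ left.toLeftBialgebroidData right.toRightBialgebroidData
  S_twist_L : ∀ l l' a, S (left.t l * a * left.t l') = left.s l' * S a * left.s l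
  S_twist_R : ∀ r r' a, S (right.t r' * a * right.t r) = right.s r * S a * right.s r'
  antipode_L : ∀ a, LinearMap.mul' ℤ A
      ((LinearMap.rTensor A S.toAddMonoidHom.toIntLinearMap) (left.Δ a))
      = right.s (right.π a)
  antipode_R : ∀ a, LinearMap.mul' ℤ A
      ((LinearMap.lTensor A S.toAddMonoidHom.toIntLinearMap) (right.Δ a))
      = left.s (left.π a)

namespace SymHopfAlgebroid

variable (H : SymHopfAlgebroid A L R)

/-- Left integrals: invariants of the left regular module. -/
def IsLeftIntegral (ℓ : A) : Prop := ∀ a, a * ℓ = H.left.s (H.left.π a) * ℓ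

/-- Right integrals: invariants of the right regular module. -/
def IsRightIntegral (x : A) : Prop := ∀ a, x * a = x * H.right.s (H.right.π a)

/-- Membership in the dual `A^* = Hom(A^R, R^R)`. -/
def InAstarR (φ : A →+ R) : Prop := ∀ a r, φ (a * H.right.s r) = φ a * r

/-- Membership in the dual `^*A = Hom(^R A, ^R R)`. -/
def InstarAR (φ : A →+ R) : Prop := ∀ a r, φ (a * H.right.t r) = r * φ a

/-- Membership in the dual `A_* = Hom(A_L, L_L)`. -/
def InAstarL (φ : A →+ L) : Prop := ∀ a l, φ (H.left.t l * a) = φ a * l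

/-- Membership in the dual `_*A = Hom(_L A, _L L)`. -/
def InstarAL (φ : A →+ L) : Prop := ∀ a l, φ (H.left.s l * a) = l * φ a

/-- `φ ⇀ a = a⁽²⁾ t_R (φ a⁽¹⁾)`. -/
noncomputable def rharp (φ : A →+ R) (a : A) : A :=
  LinearMap.mul' ℤ A ((TensorProduct.comm ℤ A A)
    ((LinearMap.rTensor A (H.right.t.comp φ).toIntLinearMap) (H.right.Δ a)))

/-- `φ ⇁ a = a⁽¹⁾ s_R (φ a⁽²⁾)`. -/
noncomputable def lharp (φ : A →+ R) (a : A) : A :=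
  LinearMap.mul' ℤ A
    ((LinearMap.lTensor A (H.right.s.toAddMonoidHom.comp φ).toIntLinearMap) (H.right.Δ a))

/-- `a ↼ φ = s_L (φ a₍₁₎) a₍₂₎`. -/
noncomputable def rharpL (φ : A →+ L) (a : A) : A :=
  LinearMap.mul' ℤ A
    ((LinearMap.rTensor A (H.left.s.toAddMonoidHom.comp φ).toIntLinearMap) (H.left.Δ a))

/-- `a ↽ φ = t_L (φ a₍₂₎) a₍₁₎`. -/
noncomputable def lharpL (φ : A →+ L) (a : A) : A :=
  LinearMap.mul' ℤ A ((TensorProduct.comm ℤ A A)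
    ((LinearMap.lTensor A (H.left.t.comp φ).toIntLinearMap) (H.left.Δ a)))

/-- Non-degeneracy of a left integral: the maps `ℓ_R : A^* → A` and `_Rℓ : ^*A → A`
are bijective. -/
def IsNonDegLeftIntegral (ℓ : A) : Prop :=
  H.IsLeftIntegral ℓ ∧
  Function.Bijective (fun φ : {φ : A →+ R // H.InAstarR φ} => H.rharp φ.1 ℓ) ∧
  Function.Bijective (fun φ : {φ : A →+ R // H.InstarAR φ} => H.lharp φ.1 ℓ)

end SymHopfAlgebroid

end HopfAlgd

/-! Apply the counit `x ⊗ y ↦ t_L (π_L y) x`, which is `L`-balanced and hence defined on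
`A ⊗_L A`, to the antipode axiom `S(a₍₁₎)₍₁'₎ a₍₂₎ ⊗ S(a₍₁₎)₍₂'₎ = 1 ⊗ S(a)`: by the counit axiom
for `S(a₍₁₎)` the left side becomes `S(a₍₁₎) a₍₂₎`, and the right side is `t_L (π_L (S a))`. -/

namespace HopfAlgd.LeftBialgebroid

variable {A L : Type*} [Ring A] [Ring L] (B : LeftBialgebroid A L)

noncomputable def targetCounit : A ⊗[ℤ] A →ₗ[ℤ] A :=
  LinearMap.mul' ℤ A ∘ₗ (TensorProduct.comm ℤ A A).toLinearMap ∘ₗ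
    LinearMap.lTensor A (B.t.comp B.π).toIntLinearMap

@[simp]
theorem targetCounit_tmul (x y : A) : B.targetCounit (x ⊗ₜ[ℤ] y) = B.t (B.π y) * x :=
  rfl

@[simp]
theorem targetCounit_Δ (a : A) : B.targetCounit (B.Δ a) = a :=
  B.counit_t a

theorem π_s_mul (l : L) (b : A) : B.π (B.s l * b) = l * B.π b := by
  simpa [B.t_one] using B.π_bimod l 1 b

theorem targetCounit_eq_zero_of_mem_rel {z : A ⊗[ℤ] A} (hz : z ∈ B.rel) :
    B.targetCounit z = 0 := by
  induction hz using Submodule.span_induction with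
  | mem x hx =>
    obtain ⟨l, u, v, rfl⟩ := hx
    rw [map_sub, targetCounit_tmul, targetCounit_tmul, π_s_mul, B.t_mul, mul_assoc, sub_self]
  | zero => exact map_zero _
  | add x y _ _ hx hy => rw [map_add, hx, hy, add_zero]
  | smul n x _ hx => rw [map_zsmul, hx, smul_zero]

theorem targetCounit_m13'_tmul (w : A ⊗[ℤ] A) (y : A) :
    B.targetCounit (m13' A (w ⊗ₜ[ℤ] y)) = B.targetCounit w * y := by
  induction w using TensorProduct.induction_on with
  | zero => simp
  | tmul u v =>
    rw [show m13' A ((u ⊗ₜ[ℤ] v) ⊗ₜ[ℤ] y) = (u * y) ⊗ₜ[ℤ] v from rfl, targetCounit_tmul,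
      targetCounit_tmul, mul_assoc]
  | add w₁ w₂ h₁ h₂ => rw [TensorProduct.add_tmul, map_add, map_add, h₁, h₂, map_add, add_mul]

theorem targetCounit_axsExpr (f : A →+ A) (w : A ⊗[ℤ] A) :
    B.targetCounit (axsExpr B.Δ f w)
      = LinearMap.mul' ℤ A (LinearMap.rTensor A f.toIntLinearMap w) := by
  induction w using TensorProduct.induction_on with
  | zero => simp
  | tmul x y =>
    rw [show axsExpr B.Δ f (x ⊗ₜ[ℤ] y) = m13' A (B.Δ (f x) ⊗ₜ[ℤ] y) from rfl,
      targetCounit_m13'_tmul, targetCounit_Δ]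
    rfl
  | add w₁ w₂ h₁ h₂ => simp only [map_add, h₁, h₂]

end HopfAlgd.LeftBialgebroid

open HopfAlgd in
/-- In a Hopf algebroid `(A_L, S)` one has
`S(a₍₁₎) a₍₂₎ = t_L (π_L (S a))` for all `a ∈ A`. -/
theorem statement5 {A L : Type*} [Ring A] [Ring L]
    (B : LeftBialgebroid A L) (S : A ≃+ A) (hS : IsHopfAlgebroid B S) (a : A) :
    LinearMap.mul' ℤ A
        ((LinearMap.rTensor A S.toAddMonoidHom.toIntLinearMap) (B.Δ a))
      = B.t (B.π (S a)) := by
  have h := B.targetCounit_eq_zero_of_mem_rel (hS.axs a)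
  rwa [map_sub, sub_eq_zero, B.targetCounit_axsExpr, B.targetCounit_tmul, mul_one] at h
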